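/- arXiv:2002.10304 — 4 statements merged into one kernel-verified Lean document; each statement's English description precedes it below -/
import Mathlib

section
/- Let F be a formal power series over a field K with invertible constant term, and let G be its inverse truncated at precision k (i.e., F·G ≡ 1 mod X^k). Then for any 0 < ℓ ≤ k, the coefficients of degree k through k+ℓ-1 of the inverse of F are given by the negation of the truncation mod X^ℓ of the product of G (truncated mod X^ℓ) with the 'middle product' MP(F_{[1..k+ℓ[}, G_{[0..k[}) := ((F_{[1..k+ℓ[} · G_{[0..k[}) div X^{k-1}) mod X^ℓ. That is, if H = G − X^k·(((F_{[1..k+ℓ[}·G) div X^{k-1}) · G mod X^ℓ) then F·H ≡ 1 mod X^{k+ℓ}. -/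
open Polynomial

/-- `chunk F a b` is the polynomial `F_{[a..b[}` = Σ_{i=a}^{b-1} f_i X^{i-a}. -/
noncomputable def chunk {K : Type*} [Field K] (F : Polynomial K) (a b : ℕ) : Polynomial K :=
  ∑ i ∈ Finset.range (b - a), Polynomial.C (F.coeff (a + i)) * Polynomial.X ^ i

/-!
Write `M` for the middle product and `T = (M·G) mod X^ℓ`, so that `F·H = F·G - X^k·F·T`.
Below degree `k` this is `F·G ≡ 1`. For `j < ℓ ≤ k`, since `F·G ≡ 1 mod X^k` we get
`(F·T)_j = (M·(F·G))_j = M_j`, and `M_j = (F_{[1..[}·G)_{k-1+j} = (F·G)_{k+j} - f_0·g_{k+j}`,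
where `g_{k+j} = 0`. So the coefficients of degree `k + j` cancel as well.
-/

section Coefficients

variable {R : Type*} [Semiring R]

theorem coeff_mul_congr_left {A A' B : R[X]} {d : ℕ}
    (h : ∀ n ≤ d, A.coeff n = A'.coeff n) : (A * B).coeff d = (A' * B).coeff d := by
  simp only [coeff_mul]
  refine Finset.sum_congr rfl fun p hp => ?_
  rw [h p.1 (by rw [Finset.HasAntidiagonal.mem_antidiagonal] at hp; omega)]

theorem coeff_mul_congr_right {A B B' : R[X]} {d : ℕ}
    (h : ∀ n ≤ d, B.coeff n = B'.coeff n) : (A * B).coeff d = (A * B').coeff d := by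
  simp only [coeff_mul]
  refine Finset.sum_congr rfl fun p hp => ?_
  rw [h p.2 (by rw [Finset.HasAntidiagonal.mem_antidiagonal] at hp; omega)]

theorem coeff_mul_succ_eq_coeff_divX_mul (F G : R[X]) (n : ℕ) :
    (F * G).coeff (n + 1) = (F.divX * G).coeff n + F.coeff 0 * G.coeff (n + 1) := by
  conv_lhs => rw [← X_mul_divX_add F]
  rw [add_mul, coeff_add, mul_assoc, coeff_X_mul, coeff_C_mul]

end Coefficients

theorem coeff_mul_mul_eq_of_mul_eq_one_mod {R : Type*} [CommSemiring R] {F G : R[X]} {k : ℕ}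
    (hFG : ∀ i < k, (F * G).coeff i = if i = 0 then 1 else 0) (M : R[X]) {j : ℕ}
    (hj : j < k) : (F * (M * G)).coeff j = M.coeff j := by
  rw [mul_left_comm, coeff_mul_congr_right (B' := 1), mul_one]
  intro n hn
  rw [hFG n (by omega), coeff_one]

section Chunk

variable {K : Type*} [Field K]

theorem coeff_chunk (F : K[X]) (a b i : ℕ) :
    (chunk F a b).coeff i = if i < b - a then F.coeff (a + i) else 0 := by
  simp only [chunk, finsetSum_coeff, coeff_C_mul_X_pow, Finset.sum_ite_eq, Finset.mem_range]

theorem coeff_mul_chunk_zero (A B : K[X]) {b j : ℕ} (hj : j < b) :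
    (A * chunk B 0 b).coeff j = (A * B).coeff j :=
  coeff_mul_congr_right fun n hn => by rw [coeff_chunk, if_pos (by omega), zero_add]

theorem coeff_chunk_one_mul (F G : K[X]) {b n : ℕ} (hn : n < b - 1) :
    (chunk F 1 b * G).coeff n = (F.divX * G).coeff n :=
  coeff_mul_congr_left fun m hm => by rw [coeff_chunk, if_pos (by omega), coeff_divX, add_comm]

theorem coeff_middleProduct {F G : K[X]} {k ℓ j : ℕ} (hk : 1 ≤ k) (hj : j < ℓ)
    (hGdeg : ∀ i, k ≤ i → G.coeff i = 0) :
    (chunk (chunk F 1 (k + ℓ) * G) (k - 1) ((k - 1) + ℓ)).coeff j = (F * G).coeff (k + j) := by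
  obtain ⟨k, rfl⟩ := Nat.exists_eq_add_of_le' hk
  rw [coeff_chunk, if_pos (by omega), coeff_chunk_one_mul _ _ (by omega), Nat.add_sub_cancel,
    show k + 1 + j = k + j + 1 by omega, coeff_mul_succ_eq_coeff_divX_mul,
    hGdeg _ (by omega), mul_zero, add_zero]

end Chunk

theorem inplace_inversion_step_general {K : Type*} [Field K] (k ℓ : ℕ) (hlk : ℓ ≤ k)
    (F G : Polynomial K)
    (hGdeg : ∀ i, k ≤ i → G.coeff i = 0)
    (hFG : ∀ i < k, (F * G).coeff i = if i = 0 then 1 else 0) :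
    ∀ i < k + ℓ,
      (F * (G - Polynomial.X ^ k *
        chunk (chunk (chunk F 1 (k + ℓ) * G) (k - 1) ((k - 1) + ℓ) * G) 0 ℓ)).coeff i
      = if i = 0 then 1 else 0 := by
  intro i hi
  set M := chunk (chunk F 1 (k + ℓ) * G) (k - 1) ((k - 1) + ℓ)
  rw [show F * (G - X ^ k * chunk (M * G) 0 ℓ) = F * G - F * chunk (M * G) 0 ℓ * X ^ k by ring,
    coeff_sub, coeff_mul_X_pow']
  by_cases hik : k ≤ i
  · obtain ⟨j, rfl⟩ := Nat.exists_eq_add_of_le hik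
    have hj : j < ℓ := by omega
    rw [if_pos hik, Nat.add_sub_cancel_left, coeff_mul_chunk_zero _ _ hj,
      coeff_mul_mul_eq_of_mul_eq_one_mod hFG M (by omega),
      coeff_middleProduct (by omega) hj hGdeg, sub_self, if_neg (by omega)]
  · rw [if_neg hik, sub_zero, hFG i (by omega)]

/-- Generalized Newton iteration for power series inversion (Lemma 2.2):
if `G` is the inverse of `F` at precision `k`, then
`H = G − X^k·(MP(F_{[1..k+ℓ[}, G)·G mod X^ℓ)` is the inverse of `F` at precision `k+ℓ`,
where `MP(A,B) = ((A·B) div X^{k-1}) mod X^ℓ`. -/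
theorem inplace_inversion_step {K : Type*} [Field K] (k ℓ : ℕ) (hℓ : 0 < ℓ) (hlk : ℓ ≤ k)
    (F G : Polynomial K)
    (hGdeg : ∀ i, k ≤ i → G.coeff i = 0)
    (hFG : ∀ i < k, (F * G).coeff i = if i = 0 then 1 else 0) :
    ∀ i < k + ℓ,
      (F * (G - Polynomial.X ^ k *
        chunk (chunk (chunk F 1 (k + ℓ) * G) (k - 1) ((k - 1) + ℓ) * G) 0 ℓ)).coeff i
      = if i = 0 then 1 else 0 :=
  inplace_inversion_step_general k ℓ hlk F G hGdeg hFG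
end

section
/- Let F and G be formal power series over a field K with G invertible (constant term nonzero), and suppose Q_k is the quotient F/G truncated at precision k (i.e., F ≡ G·Q_k mod X^k, deg Q_k < k). Then for 0 < ℓ ≤ k, the next ℓ coefficients of F/G are given by Q_ℓ = G^{-1} · ((F − G·Q_k) div X^k) mod X^ℓ; equivalently, F/G ≡ Q_k + X^k·Q_ℓ mod X^{k+ℓ}. -/
open PowerSeries

/-! If `F ≡ G·Qk (mod X^k)`, the remainder `F − G·Qk` is `X^k · S` with `S = (F − G·Qk) div X^k`,
so `F/G = Qk + X^k · G⁻¹S` exactly. Truncating `G⁻¹S` at `ℓ` only changes coefficients of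
`X^k · G⁻¹S` from index `k + ℓ` on. -/

namespace PowerSeries

theorem sub_eq_X_pow_mul_shift_of_coeff_eq {R : Type*} [Ring R] {k : ℕ} {F P : R⟦X⟧}
    (h : ∀ i < k, coeff i F = coeff i P) :
    F - P = X ^ k * mk fun t ↦ coeff (t + k) (F - P) := by
  have htrunc : trunc k (F - P) = 0 := by
    ext i
    rw [coeff_trunc, Polynomial.coeff_zero]
    split_ifs with hi
    · rw [map_sub, h i hi, sub_self]
    · rfl
  conv_lhs => rw [eq_X_pow_mul_shift_add_trunc k (F - P), htrunc]
  rw [Polynomial.coe_zero, add_zero]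

theorem coeff_X_pow_mul_trunc_of_lt {R : Type*} [CommSemiring R] {k ℓ i : ℕ} (A : R⟦X⟧)
    (hi : i < k + ℓ) :
    coeff i (X ^ k * (trunc ℓ A : R⟦X⟧)) = coeff i (X ^ k * A) := by
  rw [coeff_X_pow_mul', coeff_X_pow_mul']
  split_ifs
  · exact coeff_coe_trunc_of_lt (by omega)
  · rfl

end PowerSeries

theorem inplace_division_step_general {K : Type*} [Field K] (k ℓ : ℕ)
    (F G Qk : PowerSeries K)
    (hG : PowerSeries.constantCoeff G ≠ 0)
    (hQk : ∀ i < k, PowerSeries.coeff i F = PowerSeries.coeff i (G * Qk)) :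
    ∀ i < k + ℓ,
      PowerSeries.coeff i (F * G⁻¹) =
        PowerSeries.coeff i
          (Qk + PowerSeries.X ^ k *
            PowerSeries.mk (fun j =>
              if j < ℓ then
                PowerSeries.coeff j
                  (G⁻¹ * PowerSeries.mk (fun t => PowerSeries.coeff (t + k) (F - G * Qk)))
              else 0)) := by
  intro i hi
  set S := mk fun t ↦ coeff (t + k) (F - G * Qk)
  have hrem : F - G * Qk = X ^ k * S := sub_eq_X_pow_mul_shift_of_coeff_eq hQk
  have hquot : F * G⁻¹ = Qk + X ^ k * (G⁻¹ * S) := by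
    linear_combination G⁻¹ * hrem + Qk * PowerSeries.mul_inv_cancel G hG
  have htrunc : (mk fun j ↦ if j < ℓ then coeff j (G⁻¹ * S) else 0) = trunc ℓ (G⁻¹ * S) := by
    ext j
    rw [coeff_mk, Polynomial.coeff_coe, coeff_trunc]
  rw [hquot, htrunc, map_add, map_add, coeff_X_pow_mul_trunc_of_lt _ hi]

/-- Generalized Karp–Markstein step for power series division (Lemma 2.4):
if `Qk` is the quotient `F/G` at precision `k`, then with
`Qℓ = (G⁻¹ · ((F − G·Qk) div X^k)) mod X^ℓ` one has
`F/G ≡ Qk + X^k·Qℓ (mod X^{k+ℓ})`. -/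
theorem inplace_division_step {K : Type*} [Field K] (k ℓ : ℕ) (hℓ : 0 < ℓ) (hlk : ℓ ≤ k)
    (F G Qk : PowerSeries K)
    (hG : PowerSeries.constantCoeff G ≠ 0)
    (hQkdeg : ∀ i, k ≤ i → PowerSeries.coeff i Qk = 0)
    (hQk : ∀ i < k, PowerSeries.coeff i F = PowerSeries.coeff i (G * Qk)) :
    ∀ i < k + ℓ,
      PowerSeries.coeff i (F * G⁻¹) =
        PowerSeries.coeff i
          (Qk + PowerSeries.X ^ k *
            PowerSeries.mk (fun j =>
              if j < ℓ then
                PowerSeries.coeff j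
                  (G⁻¹ * PowerSeries.mk (fun t => PowerSeries.coeff (t + k) (F - G * Qk)))
              else 0)) :=
  inplace_division_step_general k ℓ F G Qk hG hQk
end

section
/- Let A be a polynomial of degree at most m+n-2 and B a monic polynomial of degree n-1 over a field K. Then the quotient Q = A div B satisfies rev(Q) ≡ rev(A)/rev(B) mod X^m, where rev denotes coefficient reversal at the respective degrees (rev(A) = X^{m+n-2}A(1/X), rev(B) = X^{n-1}B(1/X), rev(Q) = X^{m-1}Q(1/X)), and rev(B) has invertible constant term so the power series quotient is well defined. -/
open Polynomial

/-! Reflecting `A = B * (A /ₘ B) + A %ₘ B` at degree `deg B + e` turns the product into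
`rev B * rev (A /ₘ B)`, while the remainder, of degree `< deg B`, is sent to a multiple of
`X ^ (e + 1)`; so the two sides agree in all coefficients below `e + 1`. -/

namespace Polynomial

variable {R : Type*} [Ring R] {A B : R[X]} {e : ℕ}

theorem natDegree_divByMonic_le_of_natDegree_le (hB : B.Monic)
    (hA : A.natDegree ≤ B.natDegree + e) : (A /ₘ B).natDegree ≤ e := by
  rw [natDegree_divByMonic A hB]
  omega

theorem reflect_eq_reflect_mul_reflect_divByMonic_add (hB : B.Monic)
    (hA : A.natDegree ≤ B.natDegree + e) :
    reflect (B.natDegree + e) A =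
      reflect B.natDegree B * reflect e (A /ₘ B) + reflect (B.natDegree + e) (A %ₘ B) := by
  conv_lhs => rw [← modByMonic_add_div A B]
  rw [reflect_add, reflect_mul _ _ le_rfl (natDegree_divByMonic_le_of_natDegree_le hB hA),
    add_comm]

theorem coeff_reflect_modByMonic_of_le [Nontrivial R] (hB : B.Monic) {i : ℕ} (hi : i ≤ e) :
    (reflect (B.natDegree + e) (A %ₘ B)).coeff i = 0 := by
  rw [coeff_reflect, revAt_le (by omega)]
  refine coeff_eq_zero_of_degree_lt ((degree_modByMonic_lt A hB).trans_le ?_)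
  exact degree_le_natDegree.trans (by exact_mod_cast (by omega))

theorem coeff_reflect_eq_coeff_reflect_mul_reflect_divByMonic [Nontrivial R] (hB : B.Monic)
    (hA : A.natDegree ≤ B.natDegree + e) {i : ℕ} (hi : i ≤ e) :
    (reflect (B.natDegree + e) A).coeff i =
      (reflect B.natDegree B * reflect e (A /ₘ B)).coeff i := by
  rw [reflect_eq_reflect_mul_reflect_divByMonic_add hB hA, coeff_add,
    coeff_reflect_modByMonic_of_le hB hi, add_zero]

end Polynomial

theorem euclidean_division_by_reversal_general {K : Type*} [Field K] (m n : ℕ)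
    (hn : 1 ≤ n) (A B : Polynomial K)
    (hB : B.Monic) (hBdeg : B.natDegree = n - 1) (hA : A.natDegree ≤ m + n - 2) :
    (Polynomial.reflect (n - 1) B).coeff 0 = 1 ∧
    ∀ i < m,
      (Polynomial.reflect (m + n - 2) A).coeff i =
        (Polynomial.reflect (n - 1) B * Polynomial.reflect (m - 1) (A /ₘ B)).coeff i := by
  refine ⟨?_, fun i hi => ?_⟩
  · rw [← hBdeg]
    exact (coeff_zero_reverse B).trans hB.leadingCoeff
  · have hdeg : m + n - 2 = B.natDegree + (m - 1) := by omega
    rw [hdeg, ← hBdeg]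
    exact coeff_reflect_eq_coeff_reflect_mul_reflect_divByMonic hB (hdeg ▸ hA) (by omega)

/-- Fast Euclidean division via reversal: for `A` of degree ≤ m+n-2 and `B` monic of
degree `n-1`, the quotient `Q = A div B` satisfies
`rev(A) ≡ rev(B)·rev(Q) (mod X^m)`, i.e. `rev(Q) ≡ rev(A)/rev(B) (mod X^m)`,
where `rev` is coefficient reversal at degrees `m+n-2`, `n-1`, `m-1` respectively;
moreover `rev(B)` has constant coefficient `1`, so the power series quotient is
well defined. -/
theorem euclidean_division_by_reversal {K : Type*} [Field K] (m n : ℕ)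
    (hm : 1 ≤ m) (hn : 1 ≤ n) (A B : Polynomial K)
    (hB : B.Monic) (hBdeg : B.natDegree = n - 1) (hA : A.natDegree ≤ m + n - 2) :
    (Polynomial.reflect (n - 1) B).coeff 0 = 1 ∧
    ∀ i < m,
      (Polynomial.reflect (m + n - 2) A).coeff i =
        (Polynomial.reflect (n - 1) B * Polynomial.reflect (m - 1) (A /ₘ B)).coeff i :=
  euclidean_division_by_reversal_general m n hn A B hB hBdeg hA
end

section
/- Termination and step-count bound for the in-place inversion loop: fix an integer c ≥ 2 and n ≥ 1. Define sequences by k_0 = 1, ℓ_0 = 1, k_{i+1} = k_i + ℓ_i, ℓ_{i+1} = min(k_{i+1}, ⌊(n - k_{i+1})/c⌋). Then the sequence k_i is strictly increasing while ℓ_i > 0, the loop terminates (ℓ_i reaches 0) with k_i ≥ n - c at termination, and during the 'deceleration phase' (when ℓ_i = ⌊(n-k_i)/c⌋ < k_i), the quantity t_i = n - k_i satisfies t_{i+1} ≤ t_i·(c-1)/c + 1, so the deceleration phase lasts O(log n) iterations (at most log_{c/(c-1)}(n) + O(1) steps). -/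
/-!
While `⌊(n - k)/c⌋ > k` the loop doubles `k`, so after `log₂ n + 1` steps it is in the deceleration
phase, which persists because `k` only grows. There the gap `t = n - k` evolves by
`t ↦ t - ⌊t/c⌋`; over `c` consecutive steps each decrement is at least the last one, which gives
`2 t' ≤ t + c`, i.e. `t - c` halves every `c` steps. After `c (log₂ n + 1)` steps `t ≤ c`, and one
more step makes `t < c`, at which point `ℓ = ⌊t/c⌋ = 0`.
-/

/-- The evolution of the gap `n - k` during the deceleration phase. -/
def decelStep (c t : ℕ) : ℕ := t - t / c

theorem decelStep_le (c t : ℕ) : decelStep c t ≤ t := Nat.sub_le t (t / c)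

theorem decelStep_mul_le (c t : ℕ) : decelStep c t * c ≤ t * (c - 1) + c := by
  unfold decelStep
  rcases Nat.eq_zero_or_pos c with rfl | hc
  · simp
  have hdiv := Nat.div_add_mod t c
  have hmod := Nat.mod_lt t hc
  have hle : t / c ≤ t := Nat.div_le_self t c
  zify [hle, hc] at *
  nlinarith

theorem decelStep_lt_of_le {c t : ℕ} (hc : 0 < c) (ht : t ≤ c) : decelStep c t < c := by
  unfold decelStep
  rcases ht.lt_or_eq with ht | rfl
  · rw [Nat.div_eq_of_lt ht]
    omega
  · rw [Nat.div_self hc]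
    omega

theorem iterate_decelStep_add_mul_div_le (c t s : ℕ) :
    (decelStep c)^[s] t + s * ((decelStep c)^[s] t / c) ≤ t := by
  induction s with
  | zero => simp
  | succ s ih =>
    rw [Function.iterate_succ_apply']
    set x := (decelStep c)^[s] t
    have hdiv : decelStep c x / c ≤ x / c := Nat.div_le_div_right (decelStep_le c x)
    have hle : x / c ≤ x := Nat.div_le_self x c
    calc decelStep c x + (s + 1) * (decelStep c x / c)
        ≤ (x - x / c) + (s + 1) * (x / c) := Nat.add_le_add_left (Nat.mul_le_mul_left _ hdiv) _
      _ = x + s * (x / c) := by rw [add_mul, one_mul]; omega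
      _ ≤ t := ih

theorem two_mul_iterate_decelStep_le {c : ℕ} (hc : 0 < c) (t : ℕ) :
    2 * (decelStep c)^[c] t ≤ t + c := by
  have hsum := iterate_decelStep_add_mul_div_le c t c
  set y := (decelStep c)^[c] t
  have hdiv := Nat.div_add_mod y c
  have hmod := Nat.mod_lt y hc
  omega

theorem iterate_decelStep_le {c : ℕ} (hc : 0 < c) (t m : ℕ) :
    (decelStep c)^[c * m] t ≤ t / 2 ^ m + c := by
  induction m with
  | zero => simp
  | succ m ih =>
    rw [mul_add_one, add_comm, Function.iterate_add_apply, Nat.pow_succ, ← Nat.div_div_eq_div_mul]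
    have := two_mul_iterate_decelStep_le hc ((decelStep c)^[c * m] t)
    omega

theorem iterate_decelStep_lt {c t m : ℕ} (hc : 0 < c) (ht : t < 2 ^ m) :
    (decelStep c)^[c * m + 1] t < c := by
  rw [Function.iterate_succ_apply']
  apply decelStep_lt_of_le hc
  simpa [Nat.div_eq_of_lt ht] using iterate_decelStep_le hc t m

section Loop

variable {c n : ℕ} {k ℓ : ℕ → ℕ}

theorem sub_succ_eq_decelStep (hk : ∀ i, k (i + 1) = k i + ℓ i) {i : ℕ}
    (hℓ : ℓ i = (n - k i) / c) : n - k (i + 1) = decelStep c (n - k i) := by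
  have hle : (n - k i) / c ≤ n - k i := Nat.div_le_self _ _
  rw [hk, hℓ, decelStep]
  omega

theorem decel_of_le (hk : ∀ i, k (i + 1) = k i + ℓ i) {a i : ℕ} (hai : a ≤ i)
    (hD : (n - k a) / c ≤ k a) : (n - k i) / c ≤ k i := by
  have hmono : Monotone k := monotone_nat_of_le_succ fun i => by rw [hk]; omega
  exact (Nat.div_le_div_right (Nat.sub_le_sub_left (hmono hai) n)).trans (hD.trans (hmono hai))

/-- Before deceleration sets in, `ℓ = k`, so `k i = 2 ^ i`. -/
theorem decel_or_eq_two_pow (hk0 : k 0 = 1) (hl0 : ℓ 0 = 1)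
    (hk : ∀ i, k (i + 1) = k i + ℓ i)
    (hl : ∀ i, ℓ (i + 1) = min (k (i + 1)) ((n - k (i + 1)) / c)) (i : ℕ) :
    (n - k i) / c ≤ k i ∨ k i = 2 ^ i := by
  induction i with
  | zero => simp [hk0]
  | succ i ih =>
    by_cases hD : (n - k (i + 1)) / c ≤ k (i + 1)
    · exact .inl hD
    right
    have hDi : k i < (n - k i) / c := not_le.mp fun h => hD (decel_of_le hk i.le_succ h)
    have hki : k i = 2 ^ i := ih.resolve_left hDi.not_ge
    have hℓi : ℓ i = k i := by
      cases i with
      | zero => rw [hl0, hk0]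
      | succ i => rw [hl, min_eq_left hDi.le]
    rw [hk, hℓi, hki, pow_succ]
    ring

theorem ℓ_eq_of_decel (hl : ∀ i, ℓ (i + 1) = min (k (i + 1)) ((n - k (i + 1)) / c))
    {i : ℕ} (hi : 0 < i) (hD : (n - k i) / c ≤ k i) : ℓ i = (n - k i) / c := by
  obtain ⟨j, rfl⟩ : ∃ j, i = j + 1 := ⟨i - 1, by omega⟩
  rw [hl, min_eq_right hD]

theorem sub_add_eq_iterate_decelStep (hk : ∀ i, k (i + 1) = k i + ℓ i)
    (hl : ∀ i, ℓ (i + 1) = min (k (i + 1)) ((n - k (i + 1)) / c))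
    {a : ℕ} (ha : 0 < a) (hD : (n - k a) / c ≤ k a) (m : ℕ) :
    n - k (a + m) = (decelStep c)^[m] (n - k a) := by
  induction m with
  | zero => rfl
  | succ m ih =>
    have hDm := decel_of_le hk (Nat.le_add_right a m) hD
    rw [← add_assoc, sub_succ_eq_decelStep hk (ℓ_eq_of_decel hl (by omega) hDm), ih,
      Function.iterate_succ_apply']

end Loop

theorem inplace_inversion_loop_bound_general (c n : ℕ) (hc : 2 ≤ c)
    (k ℓ : ℕ → ℕ)
    (hk0 : k 0 = 1) (hl0 : ℓ 0 = 1)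
    (hk : ∀ i, k (i + 1) = k i + ℓ i)
    (hl : ∀ i, ℓ (i + 1) = min (k (i + 1)) ((n - k (i + 1)) / c)) :
    (∀ i, 0 < ℓ i → k i < k (i + 1)) ∧
    (∀ i, ℓ i = (n - k i) / c → (n - k (i + 1)) * c ≤ (n - k i) * (c - 1) + c) ∧
    (∃ i ≤ 4 * c * (Nat.log 2 n + 2), ℓ i = 0 ∧ n - c ≤ k i) := by
  refine ⟨fun i h => by rw [hk]; omega,
    fun i h => sub_succ_eq_decelStep hk h ▸ decelStep_mul_le c _, ?_⟩
  set a := Nat.log 2 n + 1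
  have hn : n < 2 ^ a := Nat.lt_pow_succ_log_self (by norm_num) n
  have hDa : (n - k a) / c ≤ k a := by
    rcases decel_or_eq_two_pow hk0 hl0 hk hl a with hD | hka
    · exact hD
    · simp [Nat.sub_eq_zero_of_le (hka ▸ hn.le)]
  set i := a + (c * a + 1)
  have hgap : n - k i < c := by
    rw [sub_add_eq_iterate_decelStep hk hl (by omega) hDa]
    exact iterate_decelStep_lt (by omega) (lt_of_le_of_lt (Nat.sub_le n _) hn)
  have hℓ : ℓ i = 0 := by
    rw [ℓ_eq_of_decel hl (by omega) (decel_of_le hk (Nat.le_add_right a _) hDa)]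
    exact Nat.div_eq_of_lt hgap
  refine ⟨i, ?_, hℓ, by omega⟩
  have : a ≤ c * a := Nat.le_mul_of_pos_left a (by omega)
  simp only [i, a] at this ⊢
  nlinarith

/-- Termination and step-count bound for the in-place inversion loop: with
`k₀ = ℓ₀ = 1`, `k_{i+1} = k_i + ℓ_i`, `ℓ_{i+1} = min(k_{i+1}, ⌊(n-k_{i+1})/c⌋)`,
the sequence `k` strictly increases while `ℓ > 0`; during the deceleration phase
(`ℓ_i = ⌊(n-k_i)/c⌋`) the quantity `t_i = n - k_i` satisfies
`t_{i+1} ≤ t_i·(c-1)/c + 1` (cleared of denominators); and the loop terminates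
(`ℓ` reaches `0` with `k ≥ n - c`) after `O(log n)` iterations. -/
theorem inplace_inversion_loop_bound (c n : ℕ) (hc : 2 ≤ c) (hn : 1 ≤ n)
    (k ℓ : ℕ → ℕ)
    (hk0 : k 0 = 1) (hl0 : ℓ 0 = 1)
    (hk : ∀ i, k (i + 1) = k i + ℓ i)
    (hl : ∀ i, ℓ (i + 1) = min (k (i + 1)) ((n - k (i + 1)) / c)) :
    (∀ i, 0 < ℓ i → k i < k (i + 1)) ∧
    (∀ i, ℓ i = (n - k i) / c → (n - k (i + 1)) * c ≤ (n - k i) * (c - 1) + c) ∧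
    (∃ i ≤ 4 * c * (Nat.log 2 n + 2), ℓ i = 0 ∧ n - c ≤ k i) :=
  inplace_inversion_loop_bound_general c n hc k ℓ hk0 hl0 hk hl
end
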